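/- If the representation is regular and R^∞(V) reduces it (i.e. R^∞(V) is invariant under every V_i and under every V_i*), then the representation is bi-regular with respect to the Moore–Penrose inverse Ṽ†: that is, ker(I_E ⊗ Ṽ†^(n)) ⊆ ran(Ṽ†) for every n ≥ 1 (note Ṽ† is a generalized inverse of Ṽ). -/

import Mathlib

open scoped InnerProductSpace

noncomputable section

variable (H : Type) [NormedAddCommGroup H] [InnerProductSpace ℂ H]

/-- Words of length `n` in the alphabet `{1,…,d}`. -/
abbrev Word (d n : ℕ) := Fin n → Fin d

/-- `H_n`: the ℓ²-direct sum of copies of `H` indexed by words of length `n`. -/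
abbrev Hn (d n : ℕ) := PiLp 2 (fun _ : Word d n => H)

instance instHnCompleteSpace [CompleteSpace H] (d n : ℕ) : CompleteSpace (Hn H d n) :=
  ((PiLp.continuousLinearEquiv 2 ℂ (fun _ : Word d n => H)).isUniformEmbedding.completeSpace_congr
    (PiLp.continuousLinearEquiv 2 ℂ (fun _ : Word d n => H)).surjective).mpr inferInstance

/-- The coordinate projection `H_m → H` at the word `α`. -/
def coord (d m : ℕ) (α : Word d m) : Hn H d m →L[ℂ] H :=
  PiLp.proj 2 (fun _ : Word d m => H) α

/-- The embedding `H → H_n` into the coordinate at the word `α`. -/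
def singleCLM (d n : ℕ) (α : Word d n) : H →L[ℂ] Hn H d n :=
  ((PiLp.continuousLinearEquiv 2 ℂ (fun _ : Word d n => H)).symm.toContinuousLinearMap).comp
    (ContinuousLinearMap.pi (fun β : Word d n =>
      if β = α then ContinuousLinearMap.id ℂ H else 0))

/-- `V_α := V_{α_1} ∘ ⋯ ∘ V_{α_n}` for a word `α`. -/
def Vword {d : ℕ} (V : Fin d → H →L[ℂ] H) : (n : ℕ) → Word d n → (H →L[ℂ] H)
  | 0, _ => ContinuousLinearMap.id ℂ H
  | (n + 1), α => (V (α 0)).comp (Vword V n (fun i => α i.succ))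

/-- `Ṽ_n : H_n → H`, `Ṽ_n((h_α)_α) = Σ_α V_α h_α`. -/
def Vtilde {d : ℕ} (V : Fin d → H →L[ℂ] H) (n : ℕ) : Hn H d n →L[ℂ] H :=
  ∑ α : Word d n, (Vword H V n α).comp (coord H d n α)

/-- Extraction of the `α`-block: `H_{n+j} → H_j`. -/
def blockIn (d n j : ℕ) (α : Word d n) : Hn H d (n + j) →L[ℂ] Hn H d j :=
  ((PiLp.continuousLinearEquiv 2 ℂ (fun _ : Word d j => H)).symm.toContinuousLinearMap).comp
    (ContinuousLinearMap.pi (fun γ : Word d j => coord H d (n + j) (Fin.append α γ)))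

/-- Insertion of the `α`-block: `H_k → H_{n+k}`. -/
def blockOut (d n k : ℕ) (α : Word d n) : Hn H d k →L[ℂ] Hn H d (n + k) :=
  ((PiLp.continuousLinearEquiv 2 ℂ (fun _ : Word d (n + k) => H)).symm.toContinuousLinearMap).comp
    (ContinuousLinearMap.pi (fun β : Word d (n + k) =>
      if (fun i : Fin n => β (Fin.castAdd k i)) = α then
        coord H d k (fun i : Fin k => β (Fin.natAdd n i)) else 0))

/-- The amplification `I_{E^{⊗n}} ⊗ R : H_{n+j} → H_n` of a map `R : H_j → H`. -/
def ampV (d n j : ℕ) (R : Hn H d j →L[ℂ] H) : Hn H d (n + j) →L[ℂ] Hn H d n :=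
  ∑ α : Word d n, (singleCLM H d n α).comp (R.comp (blockIn H d n j α))

/-- The amplification `I_{E^{⊗n}} ⊗ S : H_n → H_{n+k}` of a map `S : H → H_k`. -/
def ampS (d n k : ℕ) (S : H →L[ℂ] Hn H d k) : Hn H d n →L[ℂ] Hn H d (n + k) :=
  ∑ α : Word d n, (blockOut H d n k α).comp (S.comp (coord H d n α))

/-- The amplification `I_{E^{⊗n}} ⊗ T : H_n → H_n` of a map `T : H → H`. -/
def ampHH (d n : ℕ) (T : H →L[ℂ] H) : Hn H d n →L[ℂ] Hn H d n :=
  ∑ α : Word d n, (singleCLM H d n α).comp (T.comp (coord H d n α))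

/-- The amplification `I_{E^{⊗n}} ⊗ R : H_{n+j} → H_{n+k}` of a map `R : H_j → H_k`. -/
def ampGen (d n j k : ℕ) (R : Hn H d j →L[ℂ] Hn H d k) :
    Hn H d (n + j) →L[ℂ] Hn H d (n + k) :=
  ∑ α : Word d n, (blockOut H d n k α).comp (R.comp (blockIn H d n j α))

/-- The iterates `S^{(n)} : H → H_n` of a map `S : H → H_1`:
`S^{(0)} = I_H` and `S^{(n+1)} = (I_{E^{⊗n}} ⊗ S) ∘ S^{(n)}`. -/
def Siter {d : ℕ} (S : H →L[ℂ] Hn H d 1) : (n : ℕ) → (H →L[ℂ] Hn H d n)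
  | 0 => singleCLM H d 0 (fun i => i.elim0)
  | (n + 1) => (ampS H d n 1 S).comp (Siter S n)

/-- The generalized range `R^∞(V) = ⋂_{n ≥ 1} ran Ṽ_n`. -/
def Rinf {d : ℕ} (V : Fin d → H →L[ℂ] H) : Submodule ℂ H :=
  ⨅ (n : ℕ) (_ : 1 ≤ n), LinearMap.range (Vtilde H V n).toLinearMap

/-- `H_n(K)`: families all of whose entries lie in `K` (realizing `E^{⊗n} ⊗ K`). -/
def HnSub (d n : ℕ) (K : Submodule ℂ H) : Submodule ℂ (Hn H d n) :=
  ⨅ α : Word d n, K.comap (coord H d n α).toLinearMap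

/-- The representation is regular: `ran Ṽ` is closed and
`ker Ṽ_n ⊆ ran (I_{E^{⊗n}} ⊗ Ṽ_m)` for all `n, m ≥ 1`. -/
def RepRegular {d : ℕ} (V : Fin d → H →L[ℂ] H) : Prop :=
  IsClosed (LinearMap.range (Vtilde H V 1).toLinearMap : Set H) ∧
    ∀ n m : ℕ, 1 ≤ n → 1 ≤ m →
      LinearMap.ker (Vtilde H V n).toLinearMap ≤ LinearMap.range (ampV H d n m (Vtilde H V m)).toLinearMap

/-- The reduced minimum modulus `γ(T)`. -/
def rmm {X Y : Type*} [NormedAddCommGroup X] [InnerProductSpace ℂ X]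
    [NormedAddCommGroup Y] [InnerProductSpace ℂ Y] (T : X →L[ℂ] Y) : ℝ :=
  sInf ((fun ξ => ‖T ξ‖ / Metric.infDist ξ (LinearMap.ker T.toLinearMap : Set X)) ''
    {ξ : X | ξ ∉ LinearMap.ker T.toLinearMap})

/-- The cast `H_m → H_k` along an equality `m = k` of word lengths. -/
def castHn (d : ℕ) {m k : ℕ} (h : m = k) : Hn H d m →L[ℂ] Hn H d k := by
  subst h; exact ContinuousLinearMap.id ℂ _

/-- `E^{⊗j} ⊙ K ⊆ H_{j+1}`: families all of whose `1`-blocks lie in `K ⊆ H_1`. -/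
def odotSub (d j : ℕ) (K : Submodule ℂ (Hn H d 1)) : Submodule ℂ (Hn H d (j + 1)) :=
  ⨅ α : Word d j, K.comap (blockIn H d j 1 α).toLinearMap

end

/-! If `b ∈ H` and every coordinate of `Ṽ† b` is orthogonal to `R^∞(V)`, then so is `b`: since
`R^∞(V) ⊆ ran Ṽ` and `ṼṼ†` is the orthogonal projection onto `ran Ṽ`, for `r ∈ R^∞(V)` we get
`⟪b, r⟫ = ⟪ṼṼ† b, r⟫ = Σ_i ⟪(Ṽ† b)_i, V_i* r⟫ = 0`, because `R^∞(V)` is `V_i*`-invariant.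
Iterating, `Ṽ†^(n) h = 0` forces `h ⊥ R^∞(V)`. So every `x` in the kernel of `I_E ⊗ Ṽ†^(n)` has
all coordinates orthogonal to `R^∞(V)`. Regularity puts `ker Ṽ` inside `H_1(R^∞(V))`, hence
`x ⊥ ker Ṽ`, and then `x = Ṽ†(Ṽ x)` since `Ṽ†Ṽ` is the orthogonal projection onto `(ker Ṽ)ᗮ`. -/

section MoorePenrose

variable {𝕜 X Y : Type*} [RCLike 𝕜] [NormedAddCommGroup X] [InnerProductSpace 𝕜 X]
  [NormedAddCommGroup Y] [InnerProductSpace 𝕜 Y] {T : X →L[𝕜] Y} {S : Y →L[𝕜] X}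

lemma inner_apply_apply_eq_of_mem_range [CompleteSpace Y] (h₁ : T.comp (S.comp T) = T)
    (h₃ : IsSelfAdjoint (T.comp S)) (b : Y) {r : Y} (hr : r ∈ LinearMap.range T.toLinearMap) :
    ⟪T (S b), r⟫_𝕜 = ⟪b, r⟫_𝕜 := by
  obtain ⟨y, rfl⟩ := hr
  calc ⟪T (S b), T y⟫_𝕜 = ⟪b, T (S (T y))⟫_𝕜 :=
        ContinuousLinearMap.isSelfAdjoint_iff_isSymmetric.mp h₃ b (T y)
    _ = ⟪b, T y⟫_𝕜 := by rw [show T (S (T y)) = T y from congr($h₁ y)]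

lemma apply_apply_eq_self_of_mem_orthogonal_ker [CompleteSpace X] (h₁ : T.comp (S.comp T) = T)
    (h₄ : IsSelfAdjoint (S.comp T)) {x : X} (hx : x ∈ (LinearMap.ker T.toLinearMap)ᗮ) :
    S (T x) = x := by
  set e := x - S (T x)
  have hTe : T e = 0 := by
    have : T (S (T x)) = T x := congr($h₁ x)
    simp [e, this]
  have hSTe : ⟪S (T x), e⟫_𝕜 = 0 :=
    calc ⟪S (T x), e⟫_𝕜 = ⟪x, S (T e)⟫_𝕜 :=
          ContinuousLinearMap.isSelfAdjoint_iff_isSymmetric.mp h₄ x e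
      _ = 0 := by rw [hTe, map_zero, inner_zero_right]
  have : ⟪e, e⟫_𝕜 = 0 := by
    rw [inner_sub_left, (Submodule.mem_orthogonal' _ x).mp hx e hTe, hSTe, sub_zero]
  exact (sub_eq_zero.mp (inner_self_eq_zero.mp this)).symm

end MoorePenrose

section Coordinates

variable {H : Type} [NormedAddCommGroup H] [InnerProductSpace ℂ H] {d : ℕ}

lemma singleCLM_apply {n : ℕ} (α β : Word d n) (h : H) :
    singleCLM H d n α h β = if β = α then h else 0 := by
  by_cases hβ : β = α <;> simp [singleCLM, hβ]

lemma ampS_apply_append {n k : ℕ} (S : H →L[ℂ] Hn H d k) (u : Hn H d n) (α : Word d n)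
    (γ : Word d k) : ampS H d n k S u (Fin.append α γ) = S (u α) γ := by
  simp only [ampS, blockOut, coord, FunLike.coe_sum, Finset.sum_apply, ContinuousLinearMap.comp_apply]
  rw [WithLp.ofLp_sum, Finset.sum_apply, Finset.sum_eq_single α]
  · simp
  · intro β _ hβ
    simp [Ne.symm hβ]
  · simp

lemma ampV_apply {n m : ℕ} (R : Hn H d m →L[ℂ] H) (g : Hn H d (n + m)) (α : Word d n) :
    ampV H d n m R g α = R (blockIn H d n m α g) := by
  simp [ampV, singleCLM_apply]

lemma Vtilde_one_apply (V : Fin d → H →L[ℂ] H) (u : Hn H d 1) :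
    Vtilde H V 1 u = ∑ γ : Word d 1, V (γ 0) (u γ) := by
  simp [Vtilde, Vword, coord]

lemma Siter_zero_apply (S : H →L[ℂ] Hn H d 1) (h : H) (α : Word d 0) :
    Siter H S 0 h α = h := by
  simp [Siter, singleCLM_apply, Subsingleton.elim α (fun i => i.elim0)]

lemma Siter_succ_apply_append (S : H →L[ℂ] Hn H d 1) (n : ℕ) (h : H) (α : Word d n)
    (γ : Word d 1) : Siter H S (n + 1) h (Fin.append α γ) = S (Siter H S n h α) γ :=
  ampS_apply_append S _ α γ

lemma mem_HnSub_iff {n : ℕ} {K : Submodule ℂ H} {x : Hn H d n} :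
    x ∈ HnSub H d n K ↔ ∀ α, x α ∈ K := by
  simp [HnSub, Submodule.mem_iInf, coord]

lemma HnSub_orthogonal_le (n : ℕ) (K : Submodule ℂ H) :
    HnSub H d n Kᗮ ≤ (HnSub H d n K)ᗮ := by
  intro x hx
  rw [Submodule.mem_orthogonal']
  intro y hy
  rw [PiLp.inner_apply]
  exact Finset.sum_eq_zero fun α _ =>
    (Submodule.mem_orthogonal' _ _).mp (mem_HnSub_iff.mp hx α) _ (mem_HnSub_iff.mp hy α)

lemma ker_ampS_le {n k : ℕ} (S : H →L[ℂ] Hn H d k) :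
    LinearMap.ker (ampS H d n k S).toLinearMap ≤ HnSub H d n (LinearMap.ker S.toLinearMap) := by
  intro u hu
  refine mem_HnSub_iff.mpr fun α => ?_
  ext γ
  simpa [ampS_apply_append] using congr($(LinearMap.mem_ker.mp hu) (Fin.append α γ))

end Coordinates

section Representation

variable {H : Type} [NormedAddCommGroup H] [InnerProductSpace ℂ H] {d : ℕ}
  {V : Fin d → H →L[ℂ] H}

lemma Rinf_le_range_Vtilde {n : ℕ} (hn : 1 ≤ n) :
    Rinf H V ≤ LinearMap.range (Vtilde H V n).toLinearMap :=
  fun _ hr => Submodule.mem_iInf _ |>.mp (Submodule.mem_iInf _ |>.mp hr n) hn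

lemma RepRegular.ker_Vtilde_one_le (hreg : RepRegular H V) :
    LinearMap.ker (Vtilde H V 1).toLinearMap ≤ HnSub H d 1 (Rinf H V) := by
  intro x hx
  refine mem_HnSub_iff.mpr fun α =>
    (Submodule.mem_iInf _).mpr fun m => (Submodule.mem_iInf _).mpr fun hm => ?_
  obtain ⟨g, hg⟩ := hreg.2 1 m le_rfl hm hx
  exact ⟨blockIn H d 1 m α g, (ampV_apply _ g α).symm.trans congr($hg α)⟩

lemma inner_Vtilde_one_left [CompleteSpace H] (u : Hn H d 1) (r : H) :
    ⟪Vtilde H V 1 u, r⟫_ℂ = ∑ γ : Word d 1, ⟪u γ, ContinuousLinearMap.adjoint (V (γ 0)) r⟫_ℂ := by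
  simp [Vtilde_one_apply, ContinuousLinearMap.adjoint_inner_right]

variable [CompleteSpace H] {K : Submodule ℂ H} {Vdag : H →L[ℂ] Hn H d 1}

lemma mem_orthogonal_of_Vdag_mem_HnSub (hK : K ≤ LinearMap.range (Vtilde H V 1).toLinearMap)
    (hKadj : ∀ i, ∀ h ∈ K, ContinuousLinearMap.adjoint (V i) h ∈ K)
    (mp1 : (Vtilde H V 1).comp (Vdag.comp (Vtilde H V 1)) = Vtilde H V 1)
    (mp3 : IsSelfAdjoint ((Vtilde H V 1).comp Vdag)) {b : H}
    (hb : Vdag b ∈ HnSub H d 1 Kᗮ) : b ∈ Kᗮ := by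
  refine (Submodule.mem_orthogonal' _ b).mpr fun r hr => ?_
  rw [← inner_apply_apply_eq_of_mem_range mp1 mp3 b (hK hr), inner_Vtilde_one_left]
  exact Finset.sum_eq_zero fun γ _ =>
    (Submodule.mem_orthogonal' _ _).mp (mem_HnSub_iff.mp hb γ) _ (hKadj _ r hr)

lemma mem_orthogonal_of_Siter_mem_HnSub (hK : K ≤ LinearMap.range (Vtilde H V 1).toLinearMap)
    (hKadj : ∀ i, ∀ h ∈ K, ContinuousLinearMap.adjoint (V i) h ∈ K)
    (mp1 : (Vtilde H V 1).comp (Vdag.comp (Vtilde H V 1)) = Vtilde H V 1)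
    (mp3 : IsSelfAdjoint ((Vtilde H V 1).comp Vdag)) :
    ∀ (n : ℕ) {h : H}, Siter H Vdag n h ∈ HnSub H d n Kᗮ → h ∈ Kᗮ
  | 0, h, hh => by simpa [Siter_zero_apply] using mem_HnSub_iff.mp hh (fun i => i.elim0)
  | n + 1, h, hh => by
    refine mem_orthogonal_of_Siter_mem_HnSub hK hKadj mp1 mp3 n (mem_HnSub_iff.mpr fun α => ?_)
    refine mem_orthogonal_of_Vdag_mem_HnSub hK hKadj mp1 mp3 (mem_HnSub_iff.mpr fun γ => ?_)
    simpa [Siter_succ_apply_append] using mem_HnSub_iff.mp hh (Fin.append α γ)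

end Representation

theorem stmt_16_general (H : Type) [NormedAddCommGroup H] [InnerProductSpace ℂ H] [CompleteSpace H]
    (d : ℕ) (V : Fin d → H →L[ℂ] H)
    (hreg : RepRegular H V)
    (hinvstar : ∀ i : Fin d, ∀ h ∈ Rinf H V, ContinuousLinearMap.adjoint (V i) h ∈ Rinf H V)
    (Vdag : H →L[ℂ] Hn H d 1)
    (mp1 : (Vtilde H V 1).comp (Vdag.comp (Vtilde H V 1)) = Vtilde H V 1)
    (mp3 : IsSelfAdjoint ((Vtilde H V 1).comp Vdag))
    (mp4 : IsSelfAdjoint (Vdag.comp (Vtilde H V 1))) :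
    ∀ n : ℕ, 1 ≤ n →
      LinearMap.ker (ampS H d 1 n (Siter H Vdag n)).toLinearMap ≤ LinearMap.range Vdag.toLinearMap := by
  intro n _ x hx
  have hSx : ∀ α, Siter H Vdag n (x α) = 0 := mem_HnSub_iff.mp (ker_ampS_le _ hx)
  have hx_orth : x ∈ HnSub H d 1 (Rinf H V)ᗮ := mem_HnSub_iff.mpr fun α =>
    mem_orthogonal_of_Siter_mem_HnSub (Rinf_le_range_Vtilde le_rfl) hinvstar mp1 mp3 n
      (by rw [hSx α]; exact zero_mem _)
  have hx_ker : x ∈ (LinearMap.ker (Vtilde H V 1).toLinearMap)ᗮ :=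
    Submodule.orthogonal_le hreg.ker_Vtilde_one_le (HnSub_orthogonal_le 1 _ hx_orth)
  exact ⟨_, apply_apply_eq_self_of_mem_orthogonal_ker mp1 mp4 hx_ker⟩

theorem stmt_16 (H : Type) [NormedAddCommGroup H] [InnerProductSpace ℂ H] [CompleteSpace H]
    (d : ℕ) (hd : 1 ≤ d) (V : Fin d → H →L[ℂ] H)
    (hreg : RepRegular H V)
    (hinv : ∀ i : Fin d, ∀ h ∈ Rinf H V, V i h ∈ Rinf H V)
    (hinvstar : ∀ i : Fin d, ∀ h ∈ Rinf H V, ContinuousLinearMap.adjoint (V i) h ∈ Rinf H V)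
    (Vdag : H →L[ℂ] Hn H d 1)
    (mp1 : (Vtilde H V 1).comp (Vdag.comp (Vtilde H V 1)) = Vtilde H V 1)
    (mp2 : Vdag.comp ((Vtilde H V 1).comp Vdag) = Vdag)
    (mp3 : IsSelfAdjoint ((Vtilde H V 1).comp Vdag))
    (mp4 : IsSelfAdjoint (Vdag.comp (Vtilde H V 1))) :
    ∀ n : ℕ, 1 ≤ n →
      LinearMap.ker (ampS H d 1 n (Siter H Vdag n)).toLinearMap ≤ LinearMap.range Vdag.toLinearMap :=
  stmt_16_general H d V hreg hinvstar Vdag mp1 mp3 mp4
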